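/- Consider one GNN layer with nonnegative matrices A and B_c (c in a finite colour set C), bias vector b, aggregation maxsum_k, and a monotonically increasing activation σ, acting on a fixed vertex set: for vertex v, out(v)_i = σ( (A·in(v) + Σ_c B_c · maxsum_k{in(u) | (v,u) ∈ E_c} + b)_i ), where maxsum_k is applied componentwise. If in(u) ≤ in'(u) componentwise for all vertices u, all labelling vectors are componentwise nonnegative, and E_c ⊆ E'_c for all colours c, then out(v) ≤ out'(v) componentwise for every vertex v. -/

import Mathlib

open scoped Classical

/-- `maxsum k S` is the sum of the `min(k, |S|)` largest elements of the
finite real multiset `S` (counting multiplicity), and `0` if `k = 0` or `S` is empty. -/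
noncomputable def maxsum (k : ℕ) (S : Multiset ℝ) : ℝ :=
  ((S.sort (· ≤ ·)).reverse.take k).sum

/-- One GNN layer with input dimension `m`, output dimension `n`, matrices `A` and
`B_c`, bias `b`, aggregation `maxsum_k` (applied componentwise to the multiset of
feature vectors of the `c`-neighbours), and activation `σ`:
`out(v)_i = σ((A·in(v) + Σ_c B_c · maxsum_k{in(u) | (v,u) ∈ E_c} + b)_i)`. -/
noncomputable def layerOut {Vty C : Type} [Fintype Vty] [DecidableEq Vty] [Fintype C]
    {n m : ℕ} (A : Fin n → Fin m → ℝ) (B : C → Fin n → Fin m → ℝ) (b : Fin n → ℝ)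
    (k : ℕ) (σ : ℝ → ℝ) (E : C → Finset (Vty × Vty)) (inp : Vty → Fin m → ℝ)
    (v : Vty) (i : Fin n) : ℝ :=
  σ ((∑ j, A i j * inp v j) +
     (∑ c : C, ∑ j, B c i j *
        maxsum k ((Finset.univ.filter (fun u => (v, u) ∈ E c)).val.map (fun u => inp u j))) +
     b i)

/-! `maxsum k S` of a nonnegative multiset is the largest sum of a sub-multiset of `S` with at
most `k` elements: the top `k` entries of the decreasing sort beat any such sub-multiset. This
characterisation makes `maxsum k` monotone both in the entries and under enlarging the multiset,
and the layer is built from it by nonnegative linear combinations and the monotone `σ`. -/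

theorem Multiset.exists_le_map_eq_of_le_map {α β : Type*} {f : α → β} {U : Multiset β}
    {M : Multiset α} (h : U ≤ M.map f) : ∃ M₀ ≤ M, M₀.map f = U := by
  induction M using Quotient.inductionOn
  induction U using Quotient.inductionOn
  obtain ⟨u, hperm, hsub⟩ := Multiset.coe_le.1 h
  obtain ⟨l, hl, rfl⟩ := List.sublist_map_iff.1 hsub
  exact ⟨l, Multiset.coe_le.2 hl.subperm, Quot.sound hperm⟩

section OrderedAddMonoid

variable {α : Type*} [AddCommMonoid α] [PartialOrder α] [IsOrderedAddMonoid α]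

theorem List.sum_take_le_sum_take_cons {a : α} {L : List α} (ha : 0 ≤ a) (hL : ∀ x ∈ L, x ≤ a)
    (k : ℕ) : (L.take k).sum ≤ ((a :: L).take k).sum := by
  cases k with
  | zero => simp
  | succ k =>
    have hnext : (L[k]?.toList).sum ≤ a := by
      cases hx : L[k]? with
      | none => simpa using ha
      | some x => simpa using hL x (List.mem_of_getElem? hx)
    rw [List.take_add_one, List.take_succ_cons, List.sum_append, List.sum_cons, add_comm]
    gcongr

theorem List.sum_le_sum_take_of_pairwise_ge {L : List α} (hL : L.Pairwise (· ≥ ·))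
    (h0 : ∀ x ∈ L, 0 ≤ x) {U : Multiset α} (hU : U ≤ L) {k : ℕ}
    (hk : Multiset.card U ≤ k) : U.sum ≤ (L.take k).sum := by
  induction L generalizing U k with
  | nil => simp_all
  | cons a L ih =>
    obtain ⟨haL, hL⟩ := List.pairwise_cons.1 hL
    have h0L : ∀ x ∈ L, 0 ≤ x := fun x hx => h0 x (List.mem_cons_of_mem a hx)
    by_cases ha : a ∈ U
    · obtain ⟨U, rfl⟩ := Multiset.exists_cons_of_mem ha
      rw [Multiset.card_cons] at hk
      obtain ⟨k, rfl⟩ := Nat.exists_eq_add_one_of_ne_zero (by omega : k ≠ 0)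
      have hUL : U ≤ L := (Multiset.cons_le_cons_iff a).1 hU
      rw [Multiset.sum_cons, List.take_succ_cons, List.sum_cons]
      gcongr
      exact ih hL h0L hUL (by omega)
    · have hUL : U ≤ L := (Multiset.le_cons_of_notMem ha).1 hU
      exact (ih hL h0L hUL hk).trans
        (List.sum_take_le_sum_take_cons (h0 a List.mem_cons_self) haL k)

end OrderedAddMonoid

theorem Multiset.coe_reverse_sort {α : Type*} [LinearOrder α] (S : Multiset α) :
    (((S.sort (· ≤ ·)).reverse : List α) : Multiset α) = S := by
  rw [Multiset.coe_reverse, Multiset.sort_eq]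

theorem exists_le_card_le_sum_eq_maxsum (k : ℕ) (S : Multiset ℝ) :
    ∃ U ≤ S, Multiset.card U ≤ k ∧ U.sum = maxsum k S := by
  refine ⟨((S.sort (· ≤ ·)).reverse.take k : List ℝ), ?_, by simp, rfl⟩
  calc (((S.sort (· ≤ ·)).reverse.take k : List ℝ) : Multiset ℝ)
      ≤ ((S.sort (· ≤ ·)).reverse : List ℝ) := Multiset.coe_le.2 (List.take_sublist _ _).subperm
    _ = S := S.coe_reverse_sort

theorem sum_le_maxsum {k : ℕ} {S U : Multiset ℝ} (hS : ∀ x ∈ S, 0 ≤ x) (hU : U ≤ S)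
    (hk : Multiset.card U ≤ k) : U.sum ≤ maxsum k S := by
  have hsort := S.coe_reverse_sort
  exact List.sum_le_sum_take_of_pairwise_ge
    (List.pairwise_reverse.2 (Multiset.pairwise_sort S (· ≤ ·)))
    (fun x hx => hS x (hsort ▸ Multiset.mem_coe.2 hx)) (hU.trans_eq hsort.symm) hk

theorem maxsum_map_mono {α : Type*} {k : ℕ} {M M' : Multiset α} {f g : α → ℝ}
    (hM : M ≤ M') (hfg : ∀ x, f x ≤ g x) (hg : ∀ x, 0 ≤ g x) :
    maxsum k (M.map f) ≤ maxsum k (M'.map g) := by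
  obtain ⟨U, hU, hUk, hUsum⟩ := exists_le_card_le_sum_eq_maxsum k (M.map f)
  obtain ⟨M₀, hM₀, rfl⟩ := Multiset.exists_le_map_eq_of_le_map hU
  rw [← hUsum]
  calc (M₀.map f).sum ≤ (M₀.map g).sum := Multiset.sum_map_le_sum_map f g fun x _ => hfg x
    _ ≤ maxsum k (M'.map g) := by
      refine sum_le_maxsum ?_ (Multiset.map_le_map (hM₀.trans hM)) (by simpa using hUk)
      exact Multiset.forall_mem_map_iff.2 fun x _ => hg x

theorem stmt16_general {Vty C : Type} [Fintype Vty] [DecidableEq Vty] [Fintype C]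
    {n m : ℕ} (A : Fin n → Fin m → ℝ) (B : C → Fin n → Fin m → ℝ) (b : Fin n → ℝ)
    (k : ℕ) (σ : ℝ → ℝ)
    (hA : ∀ i j, 0 ≤ A i j) (hB : ∀ c i j, 0 ≤ B c i j)
    (hσ : ∀ x y : ℝ, x < y → σ x ≤ σ y)
    (inp inp' : Vty → Fin m → ℝ)
    (hnn' : ∀ u j, 0 ≤ inp' u j)
    (hle : ∀ u j, inp u j ≤ inp' u j)
    (E E' : C → Finset (Vty × Vty)) (hE : ∀ c, E c ⊆ E' c) :
    ∀ (v : Vty) (i : Fin n),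
      layerOut A B b k σ E inp v i ≤ layerOut A B b k σ E' inp' v i := by
  intro v i
  apply monotone_iff_forall_lt.2 fun x y => hσ x y
  gcongr with j _ c _ j _
  · exact hA i j
  · exact hle v j
  · exact hB c i j
  · refine maxsum_map_mono (Finset.val_le_iff.2 ?_) (fun u => hle u j) (fun u => hnn' u j)
    exact Finset.monotone_filter_right _ fun _ _ => @hE c _

/-- Monotonicity of a GNN layer with nonnegative matrices, `maxsum_k` aggregation, and a
monotonically increasing activation: if the (componentwise nonnegative) input labellings
satisfy `in(u) ≤ in'(u)` componentwise for all `u` and `E_c ⊆ E'_c` for all colours,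
then `out(v) ≤ out'(v)` componentwise for all `v`. -/
theorem stmt16 {Vty C : Type} [Fintype Vty] [DecidableEq Vty] [Fintype C]
    {n m : ℕ} (A : Fin n → Fin m → ℝ) (B : C → Fin n → Fin m → ℝ) (b : Fin n → ℝ)
    (k : ℕ) (σ : ℝ → ℝ)
    (hA : ∀ i j, 0 ≤ A i j) (hB : ∀ c i j, 0 ≤ B c i j)
    (hσ : ∀ x y : ℝ, x < y → σ x ≤ σ y)
    (inp inp' : Vty → Fin m → ℝ)
    (hnn : ∀ u j, 0 ≤ inp u j) (hnn' : ∀ u j, 0 ≤ inp' u j)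
    (hle : ∀ u j, inp u j ≤ inp' u j)
    (E E' : C → Finset (Vty × Vty)) (hE : ∀ c, E c ⊆ E' c) :
    ∀ (v : Vty) (i : Fin n),
      layerOut A B b k σ E inp v i ≤ layerOut A B b k σ E' inp' v i :=
  stmt16_general A B b k σ hA hB hσ inp inp' hnn' hle E E' hE
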